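/- arXiv:2309.15085 — 2 statements merged into one kernel-verified Lean document; each statement's English description precedes it below -/
import Mathlib

section
/- Let q ≥ 2, N ≥ 2, g ≥ 1, k ≥ 2 and Z ≥ 2 be integers, and let θ_1, …, θ_{2g} be real numbers satisfying the Artin-type bound. Then |∑_{m=1}^{Z} q^{-(2k-1)m/2} m^{-1} ∑_{l=1}^{2g} e(mθ_l)| ≤ (N-1)·( 1/(q-1) + (1.5 + log Z - log 2)/q^k ). -/
open Finset

/-- `e θ = exp(2πiθ)`. -/
noncomputable def e (θ : ℝ) : ℂ := Complex.exp (2 * Real.pi * Complex.I * θ)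

/-- The Artin-type bound: for every `m ≥ 1`,
`|∑_{l=1}^{2g} e(mθ_l)| ≤ (N-1)(q^m+1)q^{-m/2}`. -/
def ArtinBound (q N g : ℕ) (θ : ℕ → ℝ) : Prop :=
  ∀ m : ℕ, 1 ≤ m →
    ‖∑ l ∈ Finset.range (2 * g), e ((m : ℝ) * θ l)‖ ≤
      ((N : ℝ) - 1) * ((q : ℝ) ^ m + 1) * (q : ℝ) ^ (-(m : ℝ) / 2)

/-!
By the Artin-type bound the `m`-th term is at most `(N-1)(q^{-(k-1)m} + q^{-km})/m`, which for
`k ≥ 2` is at most `(N-1)(q^{-m} + q^{-k}/m)`. Summing over `m`, the first part is a geometric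
series bounded by `1/(q-1)` and the second is `q^{-k}` times the harmonic sum `H_Z`;
comparing `1/(m+1)` with `log(m+1) - log m` for `m ≥ 2` gives `H_Z ≤ 3/2 + log Z - log 2`.
-/

lemma rpow_mul_rpow_neg_half_eq_inv_pow_mul {q : ℝ} (hq : 0 < q) (k m : ℕ) :
    q ^ (-(2 * (k : ℝ) - 1) * (m : ℝ) / 2) * q ^ (-(m : ℝ) / 2) = (q ^ (k * m))⁻¹ := by
  rw [← Real.rpow_add hq, ← Real.rpow_natCast, ← Real.rpow_neg hq.le]
  push_cast
  ring_nf

lemma artin_weight_mul_le {q : ℝ} (hq : 1 ≤ q) {k m : ℕ} (hk : 2 ≤ k) (hm : 1 ≤ m) :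
    q ^ (-(2 * (k : ℝ) - 1) * (m : ℝ) / 2) * (m : ℝ)⁻¹ * ((q ^ m + 1) * q ^ (-(m : ℝ) / 2))
      ≤ q⁻¹ ^ m + (q ^ k)⁻¹ * (m : ℝ)⁻¹ := by
  have hq0 : 0 < q := zero_lt_one.trans_le hq
  have h_main : (q ^ (k * m))⁻¹ * q ^ m ≤ q⁻¹ ^ m :=
    calc (q ^ (k * m))⁻¹ * q ^ m ≤ (q ^ m * q ^ m)⁻¹ * q ^ m := by
          rw [← pow_add]
          gcongr
          nlinarith
      _ = q⁻¹ ^ m := by rw [inv_pow]; field_simp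
  have h_tail : (q ^ (k * m))⁻¹ ≤ (q ^ k)⁻¹ := by
    gcongr
    exact Nat.le_mul_of_pos_right k hm
  have hm_inv : (m : ℝ)⁻¹ ≤ 1 := inv_le_one_of_one_le₀ (by exact_mod_cast hm)
  calc q ^ (-(2 * (k : ℝ) - 1) * (m : ℝ) / 2) * (m : ℝ)⁻¹ * ((q ^ m + 1) * q ^ (-(m : ℝ) / 2))
      = (q ^ (k * m))⁻¹ * q ^ m * (m : ℝ)⁻¹ + (q ^ (k * m))⁻¹ * (m : ℝ)⁻¹ := by
        rw [← rpow_mul_rpow_neg_half_eq_inv_pow_mul hq0]; ring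
    _ ≤ q⁻¹ ^ m * 1 + (q ^ k)⁻¹ * (m : ℝ)⁻¹ := by gcongr
    _ = q⁻¹ ^ m + (q ^ k)⁻¹ * (m : ℝ)⁻¹ := by rw [mul_one]

lemma norm_artin_weight_mul_le {q c : ℝ} (hq : 1 ≤ q) (hc : 0 ≤ c) {k m : ℕ} (hk : 2 ≤ k)
    (hm : 1 ≤ m) {S : ℂ} (hS : ‖S‖ ≤ c * (q ^ m + 1) * q ^ (-(m : ℝ) / 2)) :
    ‖((q ^ (-(2 * (k : ℝ) - 1) * (m : ℝ) / 2) * (m : ℝ)⁻¹ : ℝ) : ℂ) * S‖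
      ≤ c * (q⁻¹ ^ m + (q ^ k)⁻¹ * (m : ℝ)⁻¹) := by
  have hw : 0 ≤ q ^ (-(2 * (k : ℝ) - 1) * (m : ℝ) / 2) * (m : ℝ)⁻¹ := by positivity
  rw [norm_mul, Complex.norm_of_nonneg hw]
  calc _ ≤ q ^ (-(2 * (k : ℝ) - 1) * (m : ℝ) / 2) * (m : ℝ)⁻¹ *
        (c * (q ^ m + 1) * q ^ (-(m : ℝ) / 2)) := by gcongr
    _ = c * (q ^ (-(2 * (k : ℝ) - 1) * (m : ℝ) / 2) * (m : ℝ)⁻¹ *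
        ((q ^ m + 1) * q ^ (-(m : ℝ) / 2))) := by ring
    _ ≤ c * (q⁻¹ ^ m + (q ^ k)⁻¹ * (m : ℝ)⁻¹) := by gcongr; exact artin_weight_mul_le hq hk hm

lemma inv_succ_le_log_succ_sub_log {n : ℕ} (hn : 1 ≤ n) :
    ((n + 1 : ℕ) : ℝ)⁻¹ ≤ Real.log (n + 1 : ℕ) - Real.log n := by
  have hn0 : (0 : ℝ) < n := by exact_mod_cast hn
  have h := Real.one_sub_inv_le_log_of_pos (x := ((n + 1 : ℕ) : ℝ) / n) (by positivity)
  rw [Real.log_div (by positivity) hn0.ne', inv_div] at h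
  convert h using 1
  push_cast
  field_simp
  ring

lemma sum_Ioc_inv_le_log_sub_log {a b : ℕ} (ha : 1 ≤ a) (hab : a ≤ b) :
    ∑ m ∈ Ioc a b, (m : ℝ)⁻¹ ≤ Real.log b - Real.log a := by
  induction b, hab using Nat.le_induction with
  | base => simp
  | succ n han ih =>
    rw [sum_Ioc_succ_top han]
    linarith [inv_succ_le_log_succ_sub_log (ha.trans han)]

lemma sum_Icc_inv_le_three_halves_add_log_sub_log_two {n : ℕ} (hn : 2 ≤ n) :
    ∑ m ∈ Icc 1 n, (m : ℝ)⁻¹ ≤ 1.5 + Real.log n - Real.log 2 := by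
  have h_head : ∑ m ∈ Ioc (0 : ℕ) 2, (m : ℝ)⁻¹ = 3 / 2 := by
    rw [show Ioc 0 2 = {1, 2} from rfl]
    norm_num
  calc ∑ m ∈ Icc 1 n, (m : ℝ)⁻¹
      = ∑ m ∈ Ioc (0 : ℕ) 2, (m : ℝ)⁻¹ + ∑ m ∈ Ioc 2 n, (m : ℝ)⁻¹ :=
        (sum_Ioc_consecutive _ (Nat.zero_le 2) hn).symm
    _ ≤ 3 / 2 + (Real.log n - Real.log (2 : ℕ)) :=
        h_head ▸ add_le_add le_rfl (sum_Ioc_inv_le_log_sub_log one_le_two hn)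
    _ = 1.5 + Real.log n - Real.log 2 := by norm_num; ring

lemma sum_Icc_inv_pow_le_one_div_sub_one {q : ℝ} (hq : 1 < q) (n : ℕ) :
    ∑ m ∈ Icc 1 n, q⁻¹ ^ m ≤ 1 / (q - 1) := by
  have hq0 : 0 < q := by linarith
  calc ∑ m ∈ Icc 1 n, q⁻¹ ^ m = ∑ m ∈ Ico 1 (n + 1), q⁻¹ ^ m := rfl
    _ ≤ q⁻¹ ^ 1 / (1 - q⁻¹) := geom_sum_Ico_le_of_lt_one (by positivity) (inv_lt_one_of_one_lt₀ hq)
    _ = 1 / (q - 1) := by field_simp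

theorem statement0_general (q N g k Z : ℕ) (hq : 2 ≤ q) (hN : 2 ≤ N)
    (hk : 2 ≤ k) (hZ : 2 ≤ Z) (θ : ℕ → ℝ) (hA : ArtinBound q N g θ) :
    ‖∑ m ∈ Finset.Icc 1 Z,
        (((q : ℝ) ^ (-(2 * (k : ℝ) - 1) * (m : ℝ) / 2) * (m : ℝ)⁻¹ : ℝ) : ℂ) *
          ∑ l ∈ Finset.range (2 * g), e ((m : ℝ) * θ l)‖
      ≤ ((N : ℝ) - 1) *
          (1 / ((q : ℝ) - 1) + (1.5 + Real.log Z - Real.log 2) / (q : ℝ) ^ k) := by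
  have hq1 : (1 : ℝ) < q := by exact_mod_cast hq
  have hN1 : (0 : ℝ) ≤ N - 1 := by
    rw [sub_nonneg]; exact_mod_cast one_le_two.trans hN
  calc _ ≤ ∑ m ∈ Icc 1 Z, ((N : ℝ) - 1) * ((q : ℝ)⁻¹ ^ m + ((q : ℝ) ^ k)⁻¹ * (m : ℝ)⁻¹) := by
        refine (norm_sum_le _ _).trans (sum_le_sum fun m hm ↦ ?_)
        have hm1 := (mem_Icc.mp hm).1
        exact norm_artin_weight_mul_le hq1.le hN1 hk hm1 (hA m hm1)
    _ = ((N : ℝ) - 1) * (∑ m ∈ Icc 1 Z, (q : ℝ)⁻¹ ^ m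
          + (∑ m ∈ Icc 1 Z, (m : ℝ)⁻¹) / (q : ℝ) ^ k) := by
        rw [← mul_sum, sum_add_distrib, ← mul_sum, div_eq_inv_mul]
    _ ≤ _ := by
        gcongr
        · exact sum_Icc_inv_pow_le_one_div_sub_one hq1 Z
        · exact sum_Icc_inv_le_three_halves_add_log_sub_log_two hZ

theorem statement0 (q N g k Z : ℕ) (hq : 2 ≤ q) (hN : 2 ≤ N) (hg : 1 ≤ g)
    (hk : 2 ≤ k) (hZ : 2 ≤ Z) (θ : ℕ → ℝ) (hA : ArtinBound q N g θ) :
    ‖∑ m ∈ Finset.Icc 1 Z,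
        (((q : ℝ) ^ (-(2 * (k : ℝ) - 1) * (m : ℝ) / 2) * (m : ℝ)⁻¹ : ℝ) : ℂ) *
          ∑ l ∈ Finset.range (2 * g), e ((m : ℝ) * θ l)‖
      ≤ ((N : ℝ) - 1) *
          (1 / ((q : ℝ) - 1) + (1.5 + Real.log Z - Real.log 2) / (q : ℝ) ^ k) :=
  statement0_general q N g k Z hq hN hk hZ θ hA
end

section
/- There exist absolute constants κ > 0, c₁ > 0 and c₂ > 0 such that: for all integers q ≥ 2, N ≥ 2, g ≥ 2, k ≥ 2 and all real numbers θ_1, …, θ_{2g} satisfying the Artin-type bound, if log g > κ log(Nq) then | log( ∏_{l=1}^{2g} |1 - q^{-(2k-1)/2} e(θ_l)| / ((1-q^{-k})(1-q^{1-k})) ) | ≤ c₁N/√q + c₂ N (log log g)/q^k. -/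
open Finset

/-!
With `r = q^{-(2k-1)/2}`, the logarithm of the product is `-Re ∑_m (r^m/m) ∑_l e(mθ_l)`, from the
Taylor series of `-log(1 - z)`. Since `r^m (q^m + 1) q^{-m/2} = x^m + y^m` with `x = q^{1-k}` and
`y = q^{-k}`, the Artin-type bound makes this at most `(N-1)(-log(1-x) - log(1-y))` in absolute
value, and the denominator adds `-log(1-x) - log(1-y)` once more. As `-log(1-t) ≤ 2t` for
`0 ≤ t ≤ 1/2` and `y ≤ x ≤ q^{-1/2}`, everything is bounded by `4N/√q`; the `log log g` term is
nonnegative because `log g > log(Nq) ≥ log 4 > 1`.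
-/

lemma norm_e (θ : ℝ) : ‖e θ‖ = 1 := by
  simp [e, Complex.norm_exp]

lemma e_pow (θ : ℝ) (n : ℕ) : e θ ^ n = e (n * θ) := by
  rw [e, e, ← Complex.exp_nat_mul]
  push_cast
  ring_nf

lemma Real.hasSum_taylorSeries_neg_log {x : ℝ} (hx : |x| < 1) :
    HasSum (fun m : ℕ => x ^ m / m) (-Real.log (1 - x)) := by
  rw [← hasSum_nat_add_iff' 1]
  simpa using Real.hasSum_pow_div_log_of_abs_lt_one hx

lemma Real.neg_log_one_sub_le_two_mul {t : ℝ} (ht₀ : 0 ≤ t) (ht : t ≤ 1 / 2) :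
    -Real.log (1 - t) ≤ 2 * t := by
  have hpos : 0 < 1 - t := by linarith
  have hinv : (1 - t)⁻¹ ≤ 1 + 2 * t := by
    rw [inv_le_iff_one_le_mul₀ hpos]
    nlinarith
  linarith [Real.one_sub_inv_le_log_of_pos hpos]

lemma norm_one_sub_ne_zero {w : ℂ} (hw : ‖w‖ < 1) : ‖1 - w‖ ≠ 0 := by
  rw [norm_ne_zero_iff, sub_ne_zero]
  rintro rfl
  simp at hw

lemma abs_log_prod_norm_one_sub_le {ι : Type*} (s : Finset ι) {w : ι → ℂ}
    (hw : ∀ i ∈ s, ‖w i‖ < 1) {b : ℕ → ℝ} {B : ℝ} (hb : HasSum b B)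
    (hwb : ∀ m : ℕ, ‖∑ i ∈ s, w i ^ m‖ / m ≤ b m) :
    |Real.log (∏ i ∈ s, ‖1 - w i‖)| ≤ B := by
  have hne : ∀ i ∈ s, ‖1 - w i‖ ≠ 0 := fun i hi => norm_one_sub_ne_zero (hw i hi)
  have hsum : HasSum (fun m : ℕ => ∑ i ∈ s, w i ^ m / m) (-∑ i ∈ s, Complex.log (1 - w i)) := by
    rw [← Finset.sum_neg_distrib]
    exact hasSum_sum fun i hi => Complex.hasSum_taylorSeries_neg_log (hw i hi)
  have hlog : Real.log (∏ i ∈ s, ‖1 - w i‖) = (∑ i ∈ s, Complex.log (1 - w i)).re := by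
    simp only [Real.log_prod hne, Complex.re_sum, Complex.log_re]
  calc |Real.log (∏ i ∈ s, ‖1 - w i‖)|
      ≤ ‖∑ i ∈ s, Complex.log (1 - w i)‖ := hlog ▸ Complex.abs_re_le_norm _
    _ = ‖∑' m : ℕ, ∑ i ∈ s, w i ^ m / m‖ := by rw [hsum.tsum_eq, norm_neg]
    _ ≤ B := tsum_of_norm_bounded hb fun m => by
        simpa only [← Finset.sum_div, norm_div, Complex.norm_natCast] using hwb m

lemma rpow_pow_mul_artin_eq {Q : ℝ} (hQ : 0 < Q) (k : ℝ) (m : ℕ) :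
    (Q ^ (-(2 * k - 1) / 2)) ^ m * ((Q ^ m + 1) * Q ^ (-(m : ℝ) / 2)) =
      (Q ^ (1 - k)) ^ m + (Q ^ (-k)) ^ m := by
  simp only [← Real.rpow_natCast, ← Real.rpow_mul hQ.le, mul_add, add_mul, one_mul,
    ← Real.rpow_add hQ]
  ring_nf

section ArtinBound

variable {q N g : ℕ} {θ : ℕ → ℝ}

lemma norm_sum_pow_div_le_of_artinBound (hq : 0 < q) (hA : ArtinBound q N g θ) (k : ℝ)
    (m : ℕ) :
    ‖∑ l ∈ range (2 * g), (((q : ℝ) ^ (-(2 * k - 1) / 2) : ℝ) * e (θ l)) ^ m‖ / m ≤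
      ((N : ℝ) - 1) * (((q : ℝ) ^ (1 - k)) ^ m / m + ((q : ℝ) ^ (-k)) ^ m / m) := by
  rcases Nat.eq_zero_or_pos m with rfl | hm
  · simp
  set r : ℝ := (q : ℝ) ^ (-(2 * k - 1) / 2)
  have hsum : ∑ l ∈ range (2 * g), ((r : ℂ) * e (θ l)) ^ m =
      (r ^ m : ℝ) * ∑ l ∈ range (2 * g), e (m * θ l) := by
    simp only [mul_pow, e_pow, Finset.mul_sum]
    push_cast
    rfl
  calc ‖∑ l ∈ range (2 * g), ((r : ℂ) * e (θ l)) ^ m‖ / m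
      = r ^ m * ‖∑ l ∈ range (2 * g), e (m * θ l)‖ / m := by
        rw [hsum, norm_mul, Complex.norm_of_nonneg (by positivity)]
    _ ≤ r ^ m * (((N : ℝ) - 1) * ((q : ℝ) ^ m + 1) * (q : ℝ) ^ (-(m : ℝ) / 2)) / m := by
        gcongr
        exact hA m hm
    _ = ((N : ℝ) - 1) * (((q : ℝ) ^ (1 - k)) ^ m / m + ((q : ℝ) ^ (-k)) ^ m / m) := by
        rw [← add_div, ← rpow_pow_mul_artin_eq (by exact_mod_cast hq)]
        ring

lemma abs_rpow_lt_one_of_neg (hq : 1 < q) {a : ℝ} (ha : a < 0) : |(q : ℝ) ^ a| < 1 := by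
  rw [abs_of_pos (by positivity)]
  exact Real.rpow_lt_one_of_one_lt_of_neg (by exact_mod_cast hq) ha

lemma norm_rpow_mul_e_lt_one (hq : 1 < q) {k : ℝ} (hk : 1 / 2 < k) (θ : ℝ) :
    ‖(((q : ℝ) ^ (-(2 * k - 1) / 2) : ℝ) : ℂ) * e θ‖ < 1 := by
  rw [norm_mul, norm_e, mul_one, Complex.norm_real, Real.norm_eq_abs]
  exact abs_rpow_lt_one_of_neg hq (by linarith)

lemma abs_log_prod_le_of_artinBound (hq : 1 < q) (hA : ArtinBound q N g θ) {k : ℝ}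
    (hk : 1 < k) :
    |Real.log (∏ l ∈ range (2 * g), ‖1 - (((q : ℝ) ^ (-(2 * k - 1) / 2) : ℝ) : ℂ) * e (θ l)‖)|
      ≤ ((N : ℝ) - 1) * (-Real.log (1 - (q : ℝ) ^ (1 - k)) + -Real.log (1 - (q : ℝ) ^ (-k))) :=
  abs_log_prod_norm_one_sub_le _ (fun l _ => norm_rpow_mul_e_lt_one hq (by linarith) _)
    (((Real.hasSum_taylorSeries_neg_log (abs_rpow_lt_one_of_neg hq (by linarith))).add
      (Real.hasSum_taylorSeries_neg_log (abs_rpow_lt_one_of_neg hq (by linarith)))).mul_left _)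
    (norm_sum_pow_div_le_of_artinBound (by omega) hA k)

lemma abs_log_prod_div_le_of_artinBound (hq : 2 ≤ q) (hN : 1 ≤ N) (hA : ArtinBound q N g θ)
    {k : ℝ} (hk : 2 ≤ k) :
    |Real.log ((∏ l ∈ range (2 * g), ‖1 - (((q : ℝ) ^ (-(2 * k - 1) / 2) : ℝ) : ℂ) * e (θ l)‖) /
        ((1 - (q : ℝ) ^ (-k)) * (1 - (q : ℝ) ^ (1 - k))))| ≤ 4 * N / Real.sqrt q := by
  have hq' : (2 : ℝ) ≤ q := by exact_mod_cast hq
  have hprod := abs_log_prod_le_of_artinBound (by omega) hA (by linarith : 1 < k)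
  set P := ∏ l ∈ range (2 * g), ‖1 - (((q : ℝ) ^ (-(2 * k - 1) / 2) : ℝ) : ℂ) * e (θ l)‖
  set x := (q : ℝ) ^ (1 - k)
  set y := (q : ℝ) ^ (-k)
  have hmono : ∀ a b : ℝ, a ≤ b → (q : ℝ) ^ a ≤ (q : ℝ) ^ b := fun a b hab =>
    Real.rpow_le_rpow_of_exponent_le (by linarith) hab
  have hyx : y ≤ x := hmono _ _ (by linarith)
  have hx_sqrt : x ≤ 1 / Real.sqrt q := by
    rw [Real.sqrt_eq_rpow, one_div, ← Real.rpow_neg (by positivity)]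
    exact hmono _ _ (by linarith)
  have hx_half : x ≤ 1 / 2 := by
    calc x ≤ (q : ℝ) ^ (-1 : ℝ) := hmono _ _ (by linarith)
      _ = (q : ℝ)⁻¹ := Real.rpow_neg_one _
      _ ≤ 1 / 2 := by rw [one_div]; exact inv_anti₀ two_pos hq'
  have hy : 0 < y := by positivity
  have hlogx := Real.neg_log_one_sub_le_two_mul (hy.le.trans hyx) hx_half
  have hlogy := Real.neg_log_one_sub_le_two_mul hy.le (hyx.trans hx_half)
  have hlogx₀ : Real.log (1 - x) ≤ 0 := Real.log_nonpos (by linarith) (by linarith)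
  have hlogy₀ : Real.log (1 - y) ≤ 0 := Real.log_nonpos (by linarith) (by linarith)
  have hP : P ≠ 0 := Finset.prod_ne_zero_iff.mpr fun l _ =>
    norm_one_sub_ne_zero (norm_rpow_mul_e_lt_one (by omega) (by linarith) _)
  rw [Real.log_div hP (mul_ne_zero (by linarith) (by linarith)),
    Real.log_mul (by linarith) (by linarith)]
  calc |Real.log P - (Real.log (1 - y) + Real.log (1 - x))|
      ≤ |Real.log P| + -Real.log (1 - y) + -Real.log (1 - x) := by
        rw [abs_le]; constructor <;> linarith [neg_abs_le (Real.log P), le_abs_self (Real.log P)]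
    _ ≤ N * (-Real.log (1 - x) + -Real.log (1 - y)) := by linarith
    _ ≤ N * (2 * x + 2 * y) := by gcongr
    _ ≤ N * (4 * (1 / Real.sqrt q)) := by gcongr; linarith
    _ = 4 * N / Real.sqrt q := by ring

end ArtinBound

lemma one_le_log_of_four_le {x : ℝ} (hx : 4 ≤ x) : 1 ≤ Real.log x := by
  rw [Real.le_log_iff_exp_le (by linarith)]
  linarith [Real.exp_one_lt_d9]

theorem statement3 :
    ∃ κ c₁ c₂ : ℝ, 0 < κ ∧ 0 < c₁ ∧ 0 < c₂ ∧
      ∀ (q N g k : ℕ) (θ : ℕ → ℝ), 2 ≤ q → 2 ≤ N → 2 ≤ g → 2 ≤ k →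
        ArtinBound q N g θ →
        Real.log g > κ * Real.log (N * q) →
        |Real.log ((∏ l ∈ Finset.range (2 * g),
              ‖1 - (((q : ℝ) ^ (-(2 * (k : ℝ) - 1) / 2) : ℝ) : ℂ) * e (θ l)‖) /
            ((1 - (q : ℝ) ^ (-(k : ℝ))) * (1 - (q : ℝ) ^ (1 - (k : ℝ)))))|
          ≤ c₁ * N / Real.sqrt q + c₂ * N * Real.log (Real.log g) / (q : ℝ) ^ k := by
  refine ⟨1, 4, 1, one_pos, four_pos, one_pos, ?_⟩
  intro q N g k θ hq hN _ hk hA hlog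
  have hq' : (2 : ℝ) ≤ q := by exact_mod_cast hq
  have hN' : (2 : ℝ) ≤ N := by exact_mod_cast hN
  have hquot := abs_log_prod_div_le_of_artinBound hq (by omega) hA (k := k) (by exact_mod_cast hk)
  have hloglog : 0 ≤ Real.log (Real.log g) :=
    Real.log_nonneg (by linarith [one_le_log_of_four_le (by nlinarith : (4 : ℝ) ≤ N * q)])
  have hsecond : 0 ≤ 1 * (N : ℝ) * Real.log (Real.log g) / (q : ℝ) ^ k := by positivity
  linarith
end
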